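/- Let C : ℝⁿ × ℝ → ℝⁿ be continuously differentiable and κ > 0. Suppose p : ℝ → ℝⁿ is differentiable and satisfies the decentralized closed-loop equation ṗ(t) = (I + A(t)) u(t), where A(t) = D_p C(p(t),t) and u(t) = κ (C(p(t),t) − p(t)) + ∂C/∂t (p(t),t). Then the error e(t) = p(t) − C(p(t),t) satisfies ė(t) = −κ e(t) − A(t)² u(t) for all t. -/

import Mathlib

/-! Along the trajectory, the chain rule splits `ė` into `ṗ - (A ṗ + ∂C/∂t)`. Substituting
`ṗ = u + A u` gives `u - ∂C/∂t - A² u`, and `u - ∂C/∂t = κ (C - p) = -κ e` by the definition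
of `u`: the truncated Neumann series leaves exactly `-A² u` uncancelled. -/

section PartialDerivatives

variable {𝕜 : Type*} [NontriviallyNormedField 𝕜]
  {E : Type*} [NormedAddCommGroup E] [NormedSpace 𝕜 E]
  {F : Type*} [NormedAddCommGroup F] [NormedSpace 𝕜 F]

theorem fderiv_comp_prodMk_left {f : E × 𝕜 → F} {x : E} {t : 𝕜}
    (hf : DifferentiableAt 𝕜 f (x, t)) :
    fderiv 𝕜 (fun y => f (y, t)) x = (fderiv 𝕜 f (x, t)).comp (.inl 𝕜 E 𝕜) :=
  (hf.hasFDerivAt.comp x (hasFDerivAt_prodMk_left x t)).fderiv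

theorem deriv_comp_prodMk_right {f : E × 𝕜 → F} {x : E} {t : 𝕜}
    (hf : DifferentiableAt 𝕜 f (x, t)) :
    deriv (fun s => f (x, s)) t = fderiv 𝕜 f (x, t) (0, 1) :=
  (hf.hasFDerivAt.comp_hasDerivAt t ((hasDerivAt_const t x).prodMk (hasDerivAt_id t))).deriv

theorem hasDerivAt_comp_prodMk_self {f : E × 𝕜 → F} {γ : 𝕜 → E} {γ' : E} {t : 𝕜}
    (hf : DifferentiableAt 𝕜 f (γ t, t)) (hγ : HasDerivAt γ γ' t) :
    HasDerivAt (fun τ => f (γ τ, τ))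
      (fderiv 𝕜 (fun x => f (x, t)) (γ t) γ' + deriv (fun s => f (γ t, s)) t) t := by
  have hchain := hf.hasFDerivAt.comp_hasDerivAt (f := fun τ => (γ τ, τ)) t
    (hγ.prodMk (hasDerivAt_id t))
  have hsplit : fderiv 𝕜 f (γ t, t) (γ', 1) =
      fderiv 𝕜 (fun x => f (x, t)) (γ t) γ' + deriv (fun s => f (γ t, s)) t := by
    rw [fderiv_comp_prodMk_left hf, deriv_comp_prodMk_right hf, ContinuousLinearMap.comp_apply,
      ContinuousLinearMap.inl_apply, ← map_add, Prod.mk_add_mk, add_zero, zero_add]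
  rwa [hsplit] at hchain

end PartialDerivatives

theorem tvdd1_error_dynamics_general {n : ℕ}
    (C : EuclideanSpace ℝ (Fin n) × ℝ → EuclideanSpace ℝ (Fin n))
    (hC : ContDiff ℝ 1 C) (κ : ℝ)
    (p : ℝ → EuclideanSpace ℝ (Fin n)) (hp : Differentiable ℝ p)
    (A : ℝ → (EuclideanSpace ℝ (Fin n) →L[ℝ] EuclideanSpace ℝ (Fin n)))
    (u : ℝ → EuclideanSpace ℝ (Fin n))
    (hA : ∀ t : ℝ, A t = fderiv ℝ (fun x => C (x, t)) (p t))
    (hu : ∀ t : ℝ, u t = κ • (C (p t, t) - p t) + deriv (fun s => C (p t, s)) t)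
    (hclosed : ∀ t : ℝ, deriv p t = u t + A t (u t)) :
    ∀ t : ℝ,
      deriv (fun τ => p τ - C (p τ, τ)) t
        = -κ • (p t - C (p t, t)) - A t (A t (u t)) := by
  intro t
  have hCt : DifferentiableAt ℝ C (p t, t) := hC.differentiable one_ne_zero _
  have he := (hp t).hasDerivAt.fun_sub (hasDerivAt_comp_prodMk_self hCt (hp t).hasDerivAt)
  rw [he.deriv, ← hA, hclosed, map_add, hu]
  module

/-- Error dynamics of the decentralized TVD-D₁ control law. If the
trajectory satisfies `ṗ(t) = (I + A(t)) u(t)` with `A(t) = D_p C(p(t),t)` and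
`u(t) = κ (C(p(t),t) − p(t)) + ∂C/∂t (p(t),t)`, then the error
`e(t) = p(t) − C(p(t),t)` satisfies `ė(t) = −κ e(t) − A(t)² u(t)`. -/
theorem tvdd1_error_dynamics {n : ℕ}
    (C : EuclideanSpace ℝ (Fin n) × ℝ → EuclideanSpace ℝ (Fin n))
    (hC : ContDiff ℝ 1 C) (κ : ℝ) (hκ : 0 < κ)
    (p : ℝ → EuclideanSpace ℝ (Fin n)) (hp : Differentiable ℝ p)
    (A : ℝ → (EuclideanSpace ℝ (Fin n) →L[ℝ] EuclideanSpace ℝ (Fin n)))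
    (u : ℝ → EuclideanSpace ℝ (Fin n))
    (hA : ∀ t : ℝ, A t = fderiv ℝ (fun x => C (x, t)) (p t))
    (hu : ∀ t : ℝ, u t = κ • (C (p t, t) - p t) + deriv (fun s => C (p t, s)) t)
    (hclosed : ∀ t : ℝ, deriv p t = u t + A t (u t)) :
    ∀ t : ℝ,
      deriv (fun τ => p τ - C (p τ, τ)) t
        = -κ • (p t - C (p t, t)) - A t (A t (u t)) :=
  tvdd1_error_dynamics_general C hC κ p hp A u hA hu hclosed
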